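/- arXiv:0904.2634 — 6 statements merged into one kernel-verified Lean document; each statement's English description precedes it below -/
import Mathlib

section
/- Let p, q, s be vectors in R^n with all entries positive, where p is (componentwise) nondecreasing and q is nonincreasing. If the vector s/q (componentwise division) is nondecreasing and non-constant, then ‖q‖²·(pᵀs) − (pᵀq)·(qᵀs) ≥ 0, with strict inequality if p is strictly increasing. -/
/-!
With weights `w i = q i ^ 2`, `f = p / q` and `g = s / q`, the quantity is the weighted
covariance `(∑ w) (∑ w f g) - (∑ w f) (∑ w g)`, and twice it equals
`∑ i, ∑ j, w i w j (f i - f j) (g i - g j)`. Since `p` increases and `q` decreases, `f` is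
nondecreasing like `g`, so every term is nonnegative (weighted Chebyshev sum inequality); a
strictly increasing `p` makes `f` strictly increasing, and a pair where `g` jumps then gives a
positive term.
-/

open Finset

section WeightedChebyshev

variable {ι R : Type*} [Fintype ι]

theorem two_mul_weighted_covariance_eq [CommRing R] (w f g : ι → R) :
    2 * ((∑ i, w i) * (∑ i, w i * f i * g i) - (∑ i, w i * f i) * (∑ i, w i * g i)) =
      ∑ i, ∑ j, w i * w j * ((f j - f i) * (g j - g i)) := by
  have hterm : ∀ i j, w i * w j * ((f j - f i) * (g j - g i)) =
      w i * (w j * f j * g j) - w i * g i * (w j * f j) - w i * f i * (w j * g j) +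
        w j * (w i * f i * g i) := fun i j => by ring
  simp only [hterm, sum_add_distrib, sum_sub_distrib, ← mul_sum, ← sum_mul]
  ring

variable [CommRing R] [LinearOrder R] [IsStrictOrderedRing R] {w f g : ι → R}

theorem Monovary.weighted_sum_mul_sum_le (hw : ∀ i, 0 ≤ w i) (hfg : Monovary f g) :
    (∑ i, w i * f i) * (∑ i, w i * g i) ≤ (∑ i, w i) * (∑ i, w i * f i * g i) := by
  have h : 0 ≤ ∑ i, ∑ j, w i * w j * ((f j - f i) * (g j - g i)) :=
    sum_nonneg fun i _ => sum_nonneg fun j _ =>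
      mul_nonneg (mul_nonneg (hw i) (hw j)) (hfg.sub_mul_sub_nonneg i j)
  rw [← two_mul_weighted_covariance_eq] at h
  exact sub_nonneg.1 (nonneg_of_mul_nonneg_right h two_pos)

theorem Monovary.weighted_sum_mul_sum_lt (hw : ∀ i, 0 < w i) (hfg : Monovary f g)
    {a b : ι} (hf : f a < f b) (hg : g a < g b) :
    (∑ i, w i * f i) * (∑ i, w i * g i) < (∑ i, w i) * (∑ i, w i * f i * g i) := by
  have hterm : ∀ i j, 0 ≤ w i * w j * ((f j - f i) * (g j - g i)) := fun i j =>
    mul_nonneg (mul_nonneg (hw i).le (hw j).le) (hfg.sub_mul_sub_nonneg i j)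
  have hab : 0 < w a * w b * ((f b - f a) * (g b - g a)) :=
    mul_pos (mul_pos (hw a) (hw b)) (mul_pos (sub_pos.2 hf) (sub_pos.2 hg))
  have h : 0 < ∑ i, ∑ j, w i * w j * ((f j - f i) * (g j - g i)) :=
    sum_pos' (fun i _ => sum_nonneg fun j _ => hterm i j)
      ⟨a, mem_univ a, sum_pos' (fun j _ => hterm a j) ⟨b, mem_univ b, hab⟩⟩
  rw [← two_mul_weighted_covariance_eq] at h
  exact sub_pos.1 (pos_of_mul_pos_right h zero_le_two)

end WeightedChebyshev

section MonotoneDiv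

variable {α K : Type*} [Preorder α] [Semifield K] [LinearOrder K] [IsStrictOrderedRing K]
  {p q : α → K}

theorem Monotone.div_antitone_of_pos (hp : ∀ i, 0 ≤ p i) (hq : ∀ i, 0 < q i)
    (hpm : Monotone p) (hqm : Antitone q) : Monotone fun i => p i / q i :=
  fun _ j hij => div_le_div₀ (hp j) (hpm hij) (hq j) (hqm hij)

theorem StrictMono.div_antitone_of_pos (hp : ∀ i, 0 ≤ p i) (hq : ∀ i, 0 < q i)
    (hpm : StrictMono p) (hqm : Antitone q) : StrictMono fun i => p i / q i :=
  fun _ j hij => div_lt_div₀ (hpm hij) (hqm hij.le) (hp j) (hq j)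

end MonotoneDiv

theorem lemma2_item1_general (n : ℕ) (p q s : Fin n → ℝ)
    (hp : ∀ i, 0 < p i) (hq : ∀ i, 0 < q i)
    (hpm : Monotone p) (hqm : Antitone q)
    (hsq_mono : Monotone fun i => s i / q i)
    (hsq_nonconst : ∃ i j, s i / q i ≠ s j / q j) :
    (∑ i, q i ^ 2) * (∑ i, p i * s i) - (∑ i, p i * q i) * (∑ i, q i * s i) ≥ 0 ∧
      (StrictMono p →
        (∑ i, q i ^ 2) * (∑ i, p i * s i) - (∑ i, p i * q i) * (∑ i, q i * s i) > 0) := by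
  have hw : ∀ i, 0 < q i ^ 2 := fun i => pow_pos (hq i) 2
  have hp0 : ∀ i, 0 ≤ p i := fun i => (hp i).le
  have hq0 : ∀ i, q i ≠ 0 := fun i => (hq i).ne'
  have hps : ∀ i, q i ^ 2 * (p i / q i) * (s i / q i) = p i * s i := fun i => by
    field_simp [hq0 i]
  have hpq : ∀ i, q i ^ 2 * (p i / q i) = p i * q i := fun i => by field_simp [hq0 i]
  have hqs : ∀ i, q i ^ 2 * (s i / q i) = q i * s i := fun i => by field_simp [hq0 i]
  have hmono := (hpm.div_antitone_of_pos hp0 hq hqm).monovary hsq_mono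
  simp only [← hps, ← hpq, ← hqs, ge_iff_le, gt_iff_lt, sub_nonneg, sub_pos]
  refine ⟨hmono.weighted_sum_mul_sum_le fun i => (hw i).le, fun hstrict => ?_⟩
  have hf := hstrict.div_antitone_of_pos hp0 hq hqm
  obtain ⟨i, j, hij⟩ := hsq_nonconst
  rcases hij.lt_or_gt with h | h <;>
    exact hmono.weighted_sum_mul_sum_lt hw (hf (hsq_mono.reflect_lt h)) h

theorem lemma2_item1 (n : ℕ) (p q s : Fin n → ℝ)
    (hp : ∀ i, 0 < p i) (hq : ∀ i, 0 < q i) (hs : ∀ i, 0 < s i)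
    (hpm : Monotone p) (hqm : Antitone q)
    (hsq_mono : Monotone fun i => s i / q i)
    (hsq_nonconst : ∃ i j, s i / q i ≠ s j / q j) :
    (∑ i, q i ^ 2) * (∑ i, p i * s i) - (∑ i, p i * q i) * (∑ i, q i * s i) ≥ 0 ∧
      (StrictMono p →
        (∑ i, q i ^ 2) * (∑ i, p i * s i) - (∑ i, p i * q i) * (∑ i, q i * s i) > 0) :=
  lemma2_item1_general n p q s hp hq hpm hqm hsq_mono hsq_nonconst
end

section
/- Let p, q, s be vectors in R^n with all entries positive, where p is nondecreasing and q is nonincreasing. If the vector s/q (componentwise) is nonincreasing and non-constant, then ‖q‖²·(pᵀs) − (pᵀq)·(qᵀs) ≤ 0, with strict inequality if p is strictly increasing. -/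
/-!
With weights `w i = q i ^ 2` and `f = p / q`, `g = s / q`, the expression is
`(∑ w) (∑ w f g) - (∑ w f) (∑ w g)`, which equals half of
`∑ i, ∑ j, w i w j (f i - f j) (g i - g j)`. As `f` is nondecreasing and `g` nonincreasing,
every term is `≤ 0`; if `p` is strictly increasing then so is `f`, and a pair on which `g`
drops gives a strictly negative term.
-/

open Finset

section WeightedChebyshev

variable {ι R : Type*} [Fintype ι]

theorem two_mul_sum_mul_sum_sub_eq_sum_sum [CommRing R] (a f g : ι → R) :
    2 * ((∑ i, a i) * ∑ i, a i * (f i * g i) - (∑ i, a i * f i) * ∑ i, a i * g i) =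
      ∑ i, ∑ j, a i * a j * ((f i - f j) * (g i - g j)) := by
  have hterm : ∀ i j, a i * a j * ((f i - f j) * (g i - g j)) =
      a i * (a j * (f j * g j)) + a i * (f i * g i) * a j
        - a i * f i * (a j * g j) - a i * g i * (a j * f j) := fun i j => by ring
  simp only [hterm, sum_add_distrib, sum_sub_distrib, ← mul_sum, ← sum_mul]
  ring

variable [CommRing R] [LinearOrder R] [IsStrictOrderedRing R] {a f g : ι → R}

theorem Antivary.sum_mul_sum_le_sum_mul_sum_of_nonneg (hfg : Antivary f g) (ha : ∀ i, 0 ≤ a i) :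
    (∑ i, a i) * ∑ i, a i * (f i * g i) ≤ (∑ i, a i * f i) * ∑ i, a i * g i := by
  have hsum : ∑ i, ∑ j, a i * a j * ((f i - f j) * (g i - g j)) ≤ 0 :=
    sum_nonpos fun i _ => sum_nonpos fun j _ =>
      mul_nonpos_of_nonneg_of_nonpos (mul_nonneg (ha i) (ha j)) (hfg.sub_mul_sub_nonpos j i)
  linarith [two_mul_sum_mul_sum_sub_eq_sum_sum a f g]

theorem Antivary.sum_mul_sum_lt_sum_mul_sum_of_pos (hfg : Antivary f g) (ha : ∀ i, 0 < a i)
    (hstrict : ∃ i j, f i < f j ∧ g j < g i) :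
    (∑ i, a i) * ∑ i, a i * (f i * g i) < (∑ i, a i * f i) * ∑ i, a i * g i := by
  obtain ⟨i₀, j₀, hf, hg⟩ := hstrict
  have hterm : ∀ i j, a i * a j * ((f i - f j) * (g i - g j)) ≤ 0 := fun i j =>
    mul_nonpos_of_nonneg_of_nonpos (mul_pos (ha i) (ha j)).le (hfg.sub_mul_sub_nonpos j i)
  have hterm₀ : a i₀ * a j₀ * ((f i₀ - f j₀) * (g i₀ - g j₀)) < 0 :=
    mul_neg_of_pos_of_neg (mul_pos (ha i₀) (ha j₀))
      (mul_neg_of_neg_of_pos (sub_neg.2 hf) (sub_pos.2 hg))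
  have hsum : ∑ i, ∑ j, a i * a j * ((f i - f j) * (g i - g j)) < 0 :=
    sum_neg' (fun i _ => sum_nonpos fun j _ => hterm i j)
      ⟨i₀, mem_univ _, sum_neg' (fun j _ => hterm i₀ j) ⟨j₀, mem_univ _, hterm₀⟩⟩
  linarith [two_mul_sum_mul_sum_sub_eq_sum_sum a f g]

end WeightedChebyshev

section QuotientOfMonotoneByAntitone

variable {α β : Type*} [Preorder α] [Field β] [LinearOrder β] [IsStrictOrderedRing β]
  {p q : α → β}

theorem Monotone.div_antitone (hp : Monotone p) (hq : Antitone q) (hp₀ : ∀ i, 0 ≤ p i)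
    (hq₀ : ∀ i, 0 < q i) : Monotone fun i => p i / q i := fun _ j hij =>
  div_le_div₀ (hp₀ j) (hp hij) (hq₀ j) (hq hij)

theorem StrictMono.div_antitone (hp : StrictMono p) (hq : Antitone q) (hp₀ : ∀ i, 0 ≤ p i)
    (hq₀ : ∀ i, 0 < q i) : StrictMono fun i => p i / q i := fun _ j hij =>
  div_lt_div₀ (hp hij) (hq hij.le) (hp₀ j) (hq₀ j)

end QuotientOfMonotoneByAntitone

theorem lemma2_item2_general (n : ℕ) (p q s : Fin n → ℝ)
    (hp : ∀ i, 0 < p i) (hq : ∀ i, 0 < q i)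
    (hpm : Monotone p) (hqm : Antitone q)
    (hsq_anti : Antitone fun i => s i / q i)
    (hsq_nonconst : ∃ i j, s i / q i ≠ s j / q j) :
    (∑ i, q i ^ 2) * (∑ i, p i * s i) - (∑ i, p i * q i) * (∑ i, q i * s i) ≤ 0 ∧
      (StrictMono p →
        (∑ i, q i ^ 2) * (∑ i, p i * s i) - (∑ i, p i * q i) * (∑ i, q i * s i) < 0) := by
  set f := fun i => p i / q i
  set g := fun i => s i / q i
  have hrewrite : (∑ i, q i ^ 2) * (∑ i, p i * s i) - (∑ i, p i * q i) * (∑ i, q i * s i) =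
      (∑ i, q i ^ 2) * (∑ i, q i ^ 2 * (f i * g i)) -
        (∑ i, q i ^ 2 * f i) * ∑ i, q i ^ 2 * g i := by
    have hq₀ : ∀ i, q i ≠ 0 := fun i => (hq i).ne'
    simp only [f, g]
    congr 3 <;> funext i <;> field_simp [hq₀ i]
  have hw : ∀ i, 0 < q i ^ 2 := fun i => pow_pos (hq i) 2
  have hfm : Monotone f := hpm.div_antitone hqm (fun i => (hp i).le) hq
  rw [hrewrite, sub_nonpos, sub_neg]
  refine ⟨(hfm.antivary hsq_anti).sum_mul_sum_le_sum_mul_sum_of_nonneg fun i => (hw i).le,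
    fun hps => (hfm.antivary hsq_anti).sum_mul_sum_lt_sum_mul_sum_of_pos hw ?_⟩
  obtain ⟨i, j, hij⟩ := hsq_nonconst
  have hfs : StrictMono f := hps.div_antitone hqm (fun i => (hp i).le) hq
  rcases lt_or_gt_of_ne (show i ≠ j by rintro rfl; exact hij rfl) with h | h
  · exact ⟨i, j, hfs h, (hsq_anti h.le).lt_of_ne' hij⟩
  · exact ⟨j, i, hfs h, (hsq_anti h.le).lt_of_ne hij⟩

theorem lemma2_item2 (n : ℕ) (p q s : Fin n → ℝ)
    (hp : ∀ i, 0 < p i) (hq : ∀ i, 0 < q i) (hs : ∀ i, 0 < s i)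
    (hpm : Monotone p) (hqm : Antitone q)
    (hsq_anti : Antitone fun i => s i / q i)
    (hsq_nonconst : ∃ i j, s i / q i ≠ s j / q j) :
    (∑ i, q i ^ 2) * (∑ i, p i * s i) - (∑ i, p i * q i) * (∑ i, q i * s i) ≤ 0 ∧
      (StrictMono p →
        (∑ i, q i ^ 2) * (∑ i, p i * s i) - (∑ i, p i * q i) * (∑ i, q i * s i) < 0) :=
  lemma2_item2_general n p q s hp hq hpm hqm hsq_anti hsq_nonconst
end

section
/- Let p, q, s ∈ R^n have positive entries, with p strictly increasing and q nonincreasing. If s is nonincreasing then ‖p‖²·(qᵀs) − (pᵀq)·(pᵀs) > 0, and if s is nondecreasing then ‖q‖²·(pᵀs) − (pᵀq)·(qᵀs) > 0. -/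
/-!
Both expressions have the form `‖a‖²⟪b, c⟫ - ⟪a, b⟫⟪a, c⟫`, with `(a, b) = (p, q)` in the first and
`(a, b) = (q, p)` in the second. By the Binet–Cauchy identity this is half the sum over all pairs
`(i, j)` of the product of the `2 × 2` minors `aᵢbⱼ - aⱼbᵢ` and `aᵢcⱼ - aⱼcᵢ`. The monotonicity
hypotheses make the two minors of every pair `i < j` weakly of the same sign, and strictly so for
a pair on which `s` changes.
-/

open Finset

def pairDet {ι R : Type*} [CommRing R] (a b : ι → R) (i j : ι) : R :=
  a i * b j - a j * b i

section CommRing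

variable {ι R : Type*} [CommRing R] (a b c : ι → R)

theorem pairDet_swap_rows (i j : ι) : pairDet a b i j = -pairDet b a i j := by
  unfold pairDet; ring

theorem pairDet_self (i : ι) : pairDet a b i i = 0 := by
  unfold pairDet; ring

theorem pairDet_swap_cols (i j : ι) : pairDet a b j i = -pairDet a b i j := by
  unfold pairDet; ring

theorem two_mul_sum_sq_mul_sum_mul_sub_eq [Fintype ι] :
    2 * ((∑ i, a i ^ 2) * (∑ i, b i * c i) - (∑ i, a i * b i) * (∑ i, a i * c i)) =
      ∑ i, ∑ j, pairDet a b i j * pairDet a c i j := by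
  have expand : ∀ i j, pairDet a b i j * pairDet a c i j =
      (a i ^ 2 * (b j * c j) + a j ^ 2 * (b i * c i)) -
        (a i * b i * (a j * c j) + a j * b j * (a i * c i)) := by
    intro i j; unfold pairDet; ring
  simp only [expand, sum_sub_distrib, sum_add_distrib, ← mul_sum, ← sum_mul]
  ring

end CommRing

section Real

variable {ι : Type*}

theorem pairDet_nonpos {a b : ι → ℝ} {i j : ι} (ha : a i ≤ a j) (hb : b j ≤ b i)
    (ha₀ : 0 ≤ a j) (hb₀ : 0 ≤ b j) :
    pairDet a b i j ≤ 0 := by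
  unfold pairDet; nlinarith [mul_le_mul_of_nonneg_right ha hb₀]

theorem pairDet_neg {a b : ι → ℝ} {i j : ι} (ha : a i < a j) (hb : b j ≤ b i)
    (ha₀ : 0 ≤ a j) (hb₀ : 0 < b j) :
    pairDet a b i j < 0 := by
  unfold pairDet; nlinarith [mul_lt_mul_of_pos_right ha hb₀]

theorem sum_sq_mul_sum_mul_sub_pos [Fintype ι] [LinearOrder ι] (a b c : ι → ℝ)
    (h_nonneg : ∀ i j, i < j → 0 ≤ pairDet a b i j * pairDet a c i j)
    (h_pos : ∃ i j, i < j ∧ 0 < pairDet a b i j * pairDet a c i j) :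
    0 < (∑ i, a i ^ 2) * (∑ i, b i * c i) - (∑ i, a i * b i) * (∑ i, a i * c i) := by
  have h_all : ∀ i j, 0 ≤ pairDet a b i j * pairDet a c i j := by
    intro i j
    rcases lt_trichotomy i j with hij | rfl | hij
    · exact h_nonneg i j hij
    · simp [pairDet_self]
    · simpa [pairDet_swap_cols a b i j, pairDet_swap_cols a c i j] using h_nonneg j i hij
  obtain ⟨i, j, -, hij⟩ := h_pos
  have h_sum : 0 < ∑ i, ∑ j, pairDet a b i j * pairDet a c i j :=
    sum_pos' (fun i _ => sum_nonneg fun j _ => h_all i j)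
      ⟨i, mem_univ i, sum_pos' (fun j _ => h_all i j) ⟨j, mem_univ j, hij⟩⟩
  rw [← two_mul_sum_sq_mul_sum_mul_sub_eq] at h_sum
  linarith

end Real

theorem Monotone.exists_lt_of_ne {ι α : Type*} [LinearOrder ι] [PartialOrder α] {s : ι → α}
    (hs : Monotone s) (h : ∃ i j, s i ≠ s j) : ∃ i j, i < j ∧ s i < s j := by
  obtain ⟨i, j, hij⟩ := h
  rcases lt_or_gt_of_ne (ne_of_apply_ne s hij) with hlt | hlt
  · exact ⟨i, j, hlt, (hs hlt.le).lt_of_ne hij⟩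
  · exact ⟨j, i, hlt, (hs hlt.le).lt_of_ne hij.symm⟩

theorem cor_ineq_monos (n : ℕ) (p q : Fin n → ℝ)
    (hp : ∀ i, 0 < p i) (hq : ∀ i, 0 < q i)
    (hpm : StrictMono p) (hqm : Antitone q) :
    (∀ s : Fin n → ℝ, (∀ i, 0 < s i) → Antitone s → (∃ i j, s i ≠ s j) →
      (∑ i, p i ^ 2) * (∑ i, q i * s i) - (∑ i, p i * q i) * (∑ i, p i * s i) > 0) ∧
    (∀ s : Fin n → ℝ, (∀ i, 0 < s i) → Monotone s → (∃ i j, s i ≠ s j) →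
      (∑ i, q i ^ 2) * (∑ i, p i * s i) - (∑ i, p i * q i) * (∑ i, q i * s i) > 0) := by
  constructor
  · intro s hs hsm hne
    have h_term : ∀ i j, i < j → 0 < pairDet p q i j * pairDet p s i j := fun i j hij =>
      mul_pos_of_neg_of_neg (pairDet_neg (hpm hij) (hqm hij.le) (hp j).le (hq j))
        (pairDet_neg (hpm hij) (hsm hij.le) (hp j).le (hs j))
    obtain ⟨i, j, hij, -⟩ := hsm.dual_right.exists_lt_of_ne hne
    exact sum_sq_mul_sum_mul_sub_pos p q s (fun i j hij => (h_term i j hij).le)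
      ⟨i, j, hij, h_term i j hij⟩
  · intro s hs hsm hne
    have h_term : ∀ i j,
        pairDet q p i j * pairDet q s i j = pairDet p q i j * pairDet s q i j := by
      intro i j
      rw [pairDet_swap_rows q p, pairDet_swap_rows q s, neg_mul_neg]
    obtain ⟨i, j, hij, hs_lt⟩ := hsm.exists_lt_of_ne hne
    simp only [mul_comm (p _) (q _)]
    refine sum_sq_mul_sum_mul_sub_pos q p s (fun i j hij => ?_) ⟨i, j, hij, ?_⟩
    · rw [h_term i j]
      exact mul_nonneg_of_nonpos_of_nonpos
        (pairDet_neg (hpm hij) (hqm hij.le) (hp j).le (hq j)).le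
        (pairDet_nonpos (hsm hij.le) (hqm hij.le) (hs j).le (hq j).le)
    · rw [h_term i j]
      exact mul_pos_of_neg_of_neg (pairDet_neg (hpm hij) (hqm hij.le) (hp j).le (hq j))
        (pairDet_neg hs_lt (hqm hij.le) (hs j).le (hq j))
end

section
/- Let p, q, r, s ∈ R^n have positive entries, with p strictly increasing and q nonincreasing, and suppose p·x* − s = r for a real number x*. Let (x̂, b̂) minimize ‖p·x − b·q − r‖² over (x, b) ∈ R². Then x̂ = x* + ((pᵀq)(qᵀs) − ‖q‖²(pᵀs)) / (‖p‖²‖q‖² − (pᵀq)²). Consequently, x̂ > x* if s/q is non-constant nonincreasing, x̂ < x* if s/q is non-constant nondecreasing, and x̂ = x* if s/q is constant. -/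
/-!
The minimiser satisfies the normal equations, and Cramer's rule with `r = p x* - s` gives the
formula, whose denominator is the Gram determinant of `p, q` and whose numerator `N` is, by the
Binet–Cauchy identity, `-½ ∑ᵢ ∑ⱼ (qᵢ qⱼ)² (aᵢ - aⱼ) (cᵢ - cⱼ)` with `a = p / q`, `c = s / q`.
Since `a` is strictly increasing, the sign of `N` is opposite to the direction in which `c`
varies, and `N = 0` when `c` is constant.
-/

open Finset

theorem StrictMono.sub_mul_sub_pos_of_monotone {ι α : Type*} [LinearOrder ι] [Ring α]
    [LinearOrder α] [IsStrictOrderedRing α] {a c : ι → α} (ha : StrictMono a)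
    (hc : Monotone c) {i j : ι} (h : c i ≠ c j) : 0 < (a i - a j) * (c i - c j) := by
  rcases h.lt_or_gt with h | h
  · have hij : i < j := lt_of_not_ge fun hji => (hc hji).not_gt h
    exact mul_pos_of_neg_of_neg (sub_neg.2 (ha hij)) (sub_neg.2 h)
  · have hji : j < i := lt_of_not_ge fun hij => (hc hij).not_gt h
    exact mul_pos (sub_pos.2 (ha hji)) (sub_pos.2 h)

theorem strictMono_div_of_antitone {ι : Type*} [Preorder ι] {p q : ι → ℝ}
    (hp : ∀ i, 0 ≤ p i) (hq : ∀ i, 0 < q i) (hpm : StrictMono p) (hqm : Antitone q) :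
    StrictMono fun i => p i / q i :=
  fun _ j hij => div_lt_div₀ (hpm hij) (hqm hij.le) (hp j) (hq j)

theorem exists_mul_ne_mul_of_not_proportional {ι : Type*} (p q : ι → ℝ)
    (hq : ∀ i, q i ≠ 0) (h : ¬∃ c : ℝ, ∀ i, p i = c * q i) : ∃ i j, p i * q j ≠ p j * q i := by
  contrapose! h
  rcases isEmpty_or_nonempty ι with _ | ⟨⟨j⟩⟩
  · exact ⟨0, isEmptyElim⟩
  · exact ⟨p j / q j, fun i => by rw [div_mul_eq_mul_div, eq_div_iff (hq j), h]⟩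

section Sums

variable {ι : Type*} [Fintype ι]

theorem binet_cauchy_identity {R : Type*} [CommRing R] (f g u v : ι → R) :
    ∑ i, ∑ j, (f i * g j - f j * g i) * (u i * v j - u j * v i) =
      2 * ((∑ i, f i * u i) * (∑ i, g i * v i) - (∑ i, f i * v i) * (∑ i, g i * u i)) := by
  simp_rw [show ∀ i j, (f i * g j - f j * g i) * (u i * v j - u j * v i) =
      f i * u i * (g j * v j) - f i * v i * (g j * u j)
        - g i * u i * (f j * v j) + g i * v i * (f j * u j) from fun i j => by ring,
    sum_add_distrib, sum_sub_distrib, ← mul_sum, ← sum_mul]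
  ring

theorem sum_mul_sum_lt_of_binet_cauchy_terms (f g u v : ι → ℝ)
    (hnonneg : ∀ i j, 0 ≤ (f i * g j - f j * g i) * (u i * v j - u j * v i))
    (hpos : ∃ i j, 0 < (f i * g j - f j * g i) * (u i * v j - u j * v i)) :
    (∑ i, f i * v i) * (∑ i, g i * u i) < (∑ i, f i * u i) * (∑ i, g i * v i) := by
  obtain ⟨i, j, hij⟩ := hpos
  have : 0 < ∑ i, ∑ j, (f i * g j - f j * g i) * (u i * v j - u j * v i) :=
    sum_pos' (fun i _ => sum_nonneg fun j _ => hnonneg i j)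
      ⟨i, mem_univ i, sum_pos' (fun j _ => hnonneg i j) ⟨j, mem_univ j, hij⟩⟩
  linarith [binet_cauchy_identity f g u v]

theorem sq_sum_mul_lt_sum_sq_mul_sum_sq (f g : ι → ℝ) (h : ∃ i j, f i * g j ≠ f j * g i) :
    (∑ i, f i * g i) ^ 2 < (∑ i, f i ^ 2) * (∑ i, g i ^ 2) := by
  obtain ⟨i, j, hij⟩ := h
  have := sum_mul_sum_lt_of_binet_cauchy_terms f g f g
    (fun i j => mul_self_nonneg _) ⟨i, j, mul_self_pos.2 (sub_ne_zero.2 hij)⟩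
  simpa only [← sq, mul_comm (g _) (f _)] using this

theorem sum_mul_eq_zero_of_forall_sum_sq_le (e w : ι → ℝ)
    (h : ∀ t : ℝ, ∑ i, e i ^ 2 ≤ ∑ i, (e i + t * w i) ^ 2) : ∑ i, w i * e i = 0 := by
  have hexpand : ∀ t : ℝ, ∑ i, (e i + t * w i) ^ 2 =
      ∑ i, e i ^ 2 + ((∑ i, w i ^ 2) * (t * t) + 2 * (∑ i, w i * e i) * t) := by
    intro t
    simp only [sum_mul, mul_sum, ← sum_add_distrib]
    exact sum_congr rfl fun i _ => by ring
  have := discrim_le_zero (a := ∑ i, w i ^ 2) (b := 2 * ∑ i, w i * e i) (c := 0)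
    fun t => by linarith [h t, hexpand t]
  rw [discrim] at this
  nlinarith [sq_nonneg (∑ i, w i * e i)]

theorem lsq_normal_equations (p q r : ι → ℝ) (xh bh : ℝ)
    (hmin : ∀ x b : ℝ,
      ∑ i, (xh * p i - bh * q i - r i) ^ 2 ≤ ∑ i, (x * p i - b * q i - r i) ^ 2) :
    ∑ i, p i * (xh * p i - bh * q i - r i) = 0 ∧
      ∑ i, q i * (xh * p i - bh * q i - r i) = 0 :=
  ⟨sum_mul_eq_zero_of_forall_sum_sq_le _ _ fun t =>
      (hmin (xh + t) bh).trans_eq (sum_congr rfl fun i _ => by ring),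
    sum_mul_eq_zero_of_forall_sum_sq_le _ _ fun t =>
      (hmin xh (bh - t)).trans_eq (sum_congr rfl fun i _ => by ring)⟩

theorem lsq_mul_gram_det (p q r : ι → ℝ) (xh bh : ℝ)
    (hmin : ∀ x b : ℝ,
      ∑ i, (xh * p i - bh * q i - r i) ^ 2 ≤ ∑ i, (x * p i - b * q i - r i) ^ 2) :
    xh * ((∑ i, p i ^ 2) * (∑ i, q i ^ 2) - (∑ i, p i * q i) ^ 2) =
      (∑ i, q i ^ 2) * (∑ i, p i * r i) - (∑ i, p i * q i) * (∑ i, q i * r i) := by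
  obtain ⟨hp, hq⟩ := lsq_normal_equations p q r xh bh hmin
  have hp' : xh * ∑ i, p i ^ 2 - bh * ∑ i, p i * q i - ∑ i, p i * r i = 0 := by
    rw [← hp]
    simp only [mul_sum, ← sum_sub_distrib]
    exact sum_congr rfl fun i _ => by ring
  have hq' : xh * ∑ i, p i * q i - bh * ∑ i, q i ^ 2 - ∑ i, q i * r i = 0 := by
    rw [← hq]
    simp only [mul_sum, ← sum_sub_distrib]
    exact sum_congr rfl fun i _ => by ring
  linear_combination (∑ i, q i ^ 2) * hp' - (∑ i, p i * q i) * hq'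

theorem lsq_fst_eq (p q r s : ι → ℝ) (xstar xh bh : ℝ)
    (hD : (∑ i, p i ^ 2) * (∑ i, q i ^ 2) - (∑ i, p i * q i) ^ 2 ≠ 0)
    (hexact : ∀ i, p i * xstar - s i = r i)
    (hmin : ∀ x b : ℝ,
      ∑ i, (xh * p i - bh * q i - r i) ^ 2 ≤ ∑ i, (x * p i - b * q i - r i) ^ 2) :
    xh = xstar +
      ((∑ i, p i * q i) * (∑ i, q i * s i) - (∑ i, q i ^ 2) * (∑ i, p i * s i)) /
        ((∑ i, p i ^ 2) * (∑ i, q i ^ 2) - (∑ i, p i * q i) ^ 2) := by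
  have hpr : ∑ i, p i * r i = xstar * ∑ i, p i ^ 2 - ∑ i, p i * s i := by
    simp only [← hexact, mul_sum, ← sum_sub_distrib]
    exact sum_congr rfl fun i _ => by ring
  have hqr : ∑ i, q i * r i = xstar * ∑ i, p i * q i - ∑ i, q i * s i := by
    simp only [← hexact, mul_sum, ← sum_sub_distrib]
    exact sum_congr rfl fun i _ => by ring
  rw [← sub_eq_iff_eq_add', eq_div_iff hD]
  linear_combination lsq_mul_gram_det p q r xh bh hmin + (∑ i, q i ^ 2) * hpr
    - (∑ i, p i * q i) * hqr

theorem sum_mul_sum_lt_of_monotone_div [LinearOrder ι] (p q s : ι → ℝ) (hq : ∀ i, q i ≠ 0)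
    (hpq : StrictMono fun i => p i / q i) (hsq : Monotone fun i => s i / q i)
    (hne : ∃ i j, s i / q i ≠ s j / q j) :
    (∑ i, p i * q i) * (∑ i, q i * s i) < (∑ i, q i ^ 2) * (∑ i, p i * s i) := by
  have hcross : ∀ i j, (p i * q j - p j * q i) * (s i * q j - s j * q i) =
      (q i * q j) ^ 2 * ((p i / q i - p j / q j) * (s i / q i - s j / q j)) := fun i j => by
    field_simp [hq i, hq j]
  obtain ⟨i, j, hij⟩ := hne
  have := sum_mul_sum_lt_of_binet_cauchy_terms p q s q
    (fun i j => hcross i j ▸ mul_nonneg (sq_nonneg _)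
      ((hpq.monotone.monovary hsq).sub_mul_sub_nonneg j i))
    ⟨i, j, hcross i j ▸ mul_pos (pow_two_pos_of_ne_zero (mul_ne_zero (hq i) (hq j)))
      (hpq.sub_mul_sub_pos_of_monotone hsq hij)⟩
  simpa only [← sq, mul_comm (s _) (q _), mul_comm (∑ i, q i ^ 2)] using this

theorem sum_mul_sum_lt_of_antitone_div [LinearOrder ι] (p q s : ι → ℝ) (hq : ∀ i, q i ≠ 0)
    (hpq : StrictMono fun i => p i / q i) (hsq : Antitone fun i => s i / q i)
    (hne : ∃ i j, s i / q i ≠ s j / q j) :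
    (∑ i, q i ^ 2) * (∑ i, p i * s i) < (∑ i, p i * q i) * (∑ i, q i * s i) := by
  obtain ⟨i, j, hij⟩ := hne
  have := sum_mul_sum_lt_of_monotone_div p q (-s) hq hpq
    (by simpa only [Pi.neg_apply, neg_div] using hsq.neg)
    ⟨i, j, by simpa only [Pi.neg_apply, neg_div, ne_eq, neg_inj] using hij⟩
  simp only [Pi.neg_apply, mul_neg, sum_neg_distrib] at this
  linarith

theorem sum_mul_sub_sum_mul_eq_zero_of_proportional (p q s : ι → ℝ) (c : ℝ)
    (hs : ∀ i, s i = c * q i) :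
    (∑ i, p i * q i) * (∑ i, q i * s i) - (∑ i, q i ^ 2) * (∑ i, p i * s i) = 0 := by
  simp only [hs, mul_left_comm _ c, ← mul_sum, sq]
  ring

end Sums

theorem lemma3_item1_general (n : ℕ) (p q r s : Fin n → ℝ)
    (hp : ∀ i, 0 < p i) (hq : ∀ i, 0 < q i)
    (hpm : StrictMono p) (hqm : Antitone q)
    (hnotprop : ¬ ∃ c : ℝ, ∀ i, p i = c * q i)
    (xstar : ℝ) (hexact : ∀ i, p i * xstar - s i = r i)
    (xh bh : ℝ)
    (hmin : ∀ x b : ℝ,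
      ∑ i, (xh * p i - bh * q i - r i) ^ 2 ≤ ∑ i, (x * p i - b * q i - r i) ^ 2) :
    xh = xstar +
        ((∑ i, p i * q i) * (∑ i, q i * s i) - (∑ i, q i ^ 2) * (∑ i, p i * s i)) /
          ((∑ i, p i ^ 2) * (∑ i, q i ^ 2) - (∑ i, p i * q i) ^ 2) ∧
      ((Antitone (fun i => s i / q i) ∧ (∃ i j, s i / q i ≠ s j / q j)) → xh > xstar) ∧
      ((Monotone (fun i => s i / q i) ∧ (∃ i j, s i / q i ≠ s j / q j)) → xh < xstar) ∧
      ((∃ c : ℝ, ∀ i, s i / q i = c) → xh = xstar) := by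
  have hq0 : ∀ i, q i ≠ 0 := fun i => (hq i).ne'
  have hD : 0 < (∑ i, p i ^ 2) * (∑ i, q i ^ 2) - (∑ i, p i * q i) ^ 2 :=
    sub_pos.2 (sq_sum_mul_lt_sum_sq_mul_sum_sq p q
      (exists_mul_ne_mul_of_not_proportional p q hq0 hnotprop))
  have hformula := lsq_fst_eq p q r s xstar xh bh hD.ne' hexact hmin
  have hpq := strictMono_div_of_antitone (fun i => (hp i).le) hq hpm hqm
  refine ⟨hformula, ?_, ?_, ?_⟩
  · rintro ⟨hanti, hne⟩
    rw [hformula, gt_iff_lt, lt_add_iff_pos_right]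
    exact div_pos (sub_pos.2 (sum_mul_sum_lt_of_antitone_div p q s hq0 hpq hanti hne)) hD
  · rintro ⟨hmono, hne⟩
    rw [hformula, add_lt_iff_neg_left]
    exact div_neg_of_neg_of_pos
      (sub_neg.2 (sum_mul_sum_lt_of_monotone_div p q s hq0 hpq hmono hne)) hD
  · rintro ⟨c, hc⟩
    rw [hformula, sum_mul_sub_sum_mul_eq_zero_of_proportional p q s c
      fun i => (div_eq_iff (hq0 i)).1 (hc i), zero_div, add_zero]

theorem lemma3_item1 (n : ℕ) (p q r s : Fin n → ℝ)
    (hp : ∀ i, 0 < p i) (hq : ∀ i, 0 < q i) (hr : ∀ i, 0 < r i) (hs : ∀ i, 0 < s i)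
    (hpm : StrictMono p) (hqm : Antitone q)
    (hnotprop : ¬ ∃ c : ℝ, ∀ i, p i = c * q i)
    (xstar : ℝ) (hexact : ∀ i, p i * xstar - s i = r i)
    (xh bh : ℝ)
    (hmin : ∀ x b : ℝ,
      ∑ i, (xh * p i - bh * q i - r i) ^ 2 ≤ ∑ i, (x * p i - b * q i - r i) ^ 2) :
    xh = xstar +
        ((∑ i, p i * q i) * (∑ i, q i * s i) - (∑ i, q i ^ 2) * (∑ i, p i * s i)) /
          ((∑ i, p i ^ 2) * (∑ i, q i ^ 2) - (∑ i, p i * q i) ^ 2) ∧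
      ((Antitone (fun i => s i / q i) ∧ (∃ i j, s i / q i ≠ s j / q j)) → xh > xstar) ∧
      ((Monotone (fun i => s i / q i) ∧ (∃ i j, s i / q i ≠ s j / q j)) → xh < xstar) ∧
      ((∃ c : ℝ, ∀ i, s i / q i = c) → xh = xstar) :=
  lemma3_item1_general n p q r s hp hq hpm hqm hnotprop xstar hexact xh bh hmin
end

section
/- Let p, q, r, s ∈ R^n have positive entries with p not proportional to q, and suppose p·x* − s = r. If (x̂, b̂) is the least squares minimizer of ‖p·x − b·q − r‖², then |x̂ − x*| ≤ (pᵀq)·‖q‖² / (‖p‖²‖q‖² − (pᵀq)²) · V(s/q), where V(v) = max_i v_i − min_i v_i. -/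
/-!
The normal equations of the least-squares fit, together with `r = p x* - s`, give
`(‖p‖²‖q‖² - (pᵀq)²) (x̂ - x*) = ∑ᵢ wᵢ (sᵢ / qᵢ)` with `wᵢ = ((pᵀq) qᵢ - ‖q‖² pᵢ) qᵢ`.
The weights sum to zero, so `min (s/q)` may be subtracted from every `sᵢ / qᵢ`; as
`-‖q‖² pᵢ qᵢ ≤ wᵢ ≤ (pᵀq) qᵢ²` and both bounds sum to `(pᵀq) ‖q‖²`, the right-hand side is at
most `(pᵀq) ‖q‖² V(s/q)` in absolute value. The Gram determinant is positive by the equality case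
of Cauchy–Schwarz, since `p` is not proportional to `q`.
-/

open Finset

theorem sum_mul_eq_zero_of_forall_sum_sq_le_s8 {ι : Type*} [Fintype ι] (a v : ι → ℝ)
    (h : ∀ ε : ℝ, ∑ i, a i ^ 2 ≤ ∑ i, (a i + ε * v i) ^ 2) : ∑ i, v i * a i = 0 := by
  have hmin : IsLocalMin (fun ε : ℝ => ∑ i, (a i + ε * v i) ^ 2) 0 :=
    Filter.Eventually.of_forall fun ε => by simpa using h ε
  have hderiv : HasDerivAt (fun ε : ℝ => ∑ i, (a i + ε * v i) ^ 2) (∑ i, 2 * v i * a i) 0 :=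
    HasDerivAt.fun_sum fun i _ =>
      (((hasDerivAt_mul_const (v i)).const_add (a i)).fun_pow 2).congr_deriv <| by
        simp only [Nat.cast_ofNat, zero_mul, add_zero, Nat.add_one_sub_one, pow_one]
        ring
  simpa [mul_assoc, ← mul_sum] using hmin.hasDerivAt_eq_zero hderiv

theorem sum_mul_residual_eq_zero_of_forall_le {ι : Type*} [Fintype ι] {p q r : ι → ℝ}
    {x₀ b₀ : ℝ}
    (hmin : ∀ x b : ℝ, ∑ i, (x₀ * p i - b₀ * q i - r i) ^ 2 ≤ ∑ i, (x * p i - b * q i - r i) ^ 2) :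
    ∑ i, p i * (x₀ * p i - b₀ * q i - r i) = 0 ∧ ∑ i, q i * (x₀ * p i - b₀ * q i - r i) = 0 := by
  refine ⟨sum_mul_eq_zero_of_forall_sum_sq_le_s8 _ p fun ε => ?_, ?_⟩
  · convert hmin (x₀ + ε) b₀ using 3
    ring
  · have h := sum_mul_eq_zero_of_forall_sum_sq_le_s8 _ (-q) fun ε => by
      convert hmin x₀ (b₀ + ε) using 3
      simp only [Pi.neg_apply, mul_neg]
      ring
    simpa only [Pi.neg_apply, neg_mul, sum_neg_distrib, neg_eq_zero] using h

theorem sum_sq_mul_sum_sq_sub_sq_pos {ι : Type*} [Fintype ι] {p q : ι → ℝ} (hq : q ≠ 0)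
    (hpq : ¬ ∃ c : ℝ, ∀ i, p i = c * q i) :
    0 < (∑ i, p i ^ 2) * (∑ i, q i ^ 2) - (∑ i, p i * q i) ^ 2 := by
  set A := ∑ i, p i ^ 2
  set B := ∑ i, p i * q i
  set C := ∑ i, q i ^ 2
  have hC : 0 < C := by
    obtain ⟨j, hj⟩ := Function.ne_iff.mp hq
    exact sum_pos' (fun i _ => sq_nonneg _) ⟨j, mem_univ _, sq_pos_iff.2 hj⟩
  have hlagrange : ∑ i, (C * p i - B * q i) ^ 2 = C * (A * C - B ^ 2) := by
    have hterm : ∀ i, (C * p i - B * q i) ^ 2 =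
        C ^ 2 * p i ^ 2 - 2 * C * B * (p i * q i) + B ^ 2 * q i ^ 2 := fun i => by ring
    simp only [hterm, sum_add_distrib, sum_sub_distrib, ← mul_sum]
    ring
  by_contra! hD
  have hzero : ∀ i ∈ univ, (C * p i - B * q i) ^ 2 = 0 :=
    (sum_eq_zero_iff_of_nonneg fun i _ => sq_nonneg _).mp <| le_antisymm
      (hlagrange ▸ mul_nonpos_of_nonneg_of_nonpos hC.le hD) (sum_nonneg fun i _ => sq_nonneg _)
  refine hpq ⟨B / C, fun i => ?_⟩
  have := pow_eq_zero_iff two_ne_zero |>.mp (hzero i (mem_univ i))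
  field_simp
  linarith

theorem gram_det_mul_eq_of_normal_equations {ι : Type*} [Fintype ι] {p q s : ι → ℝ} {δ b : ℝ}
    (hpe : ∑ i, p i * (δ * p i - b * q i + s i) = 0)
    (hqe : ∑ i, q i * (δ * p i - b * q i + s i) = 0) :
    ((∑ i, p i ^ 2) * (∑ i, q i ^ 2) - (∑ i, p i * q i) ^ 2) * δ =
      ∑ i, ((∑ j, p j * q j) * q i - (∑ j, q j ^ 2) * p i) * s i := by
  simp only [mul_add, mul_sub, sub_mul, sum_add_distrib, sum_sub_distrib, mul_left_comm _ δ,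
    mul_left_comm _ b, mul_comm (q _) (p _), mul_assoc, ← mul_sum, ← sq] at hpe hqe ⊢
  linear_combination (∑ i, q i ^ 2) * hpe - (∑ i, p i * q i) * hqe

theorem sum_mul_le_of_sum_eq_zero {ι : Type*} [Fintype ι] {w u t : ι → ℝ} {m M : ℝ}
    (hw : ∑ i, w i = 0) (hwu : ∀ i, w i ≤ u i) (hu : ∀ i, 0 ≤ u i)
    (ht : ∀ i, t i ∈ Set.Icc m M) :
    ∑ i, w i * t i ≤ (∑ i, u i) * (M - m) :=
  calc ∑ i, w i * t i = ∑ i, w i * (t i - m) := by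
        simp [mul_sub, sum_sub_distrib, ← sum_mul, hw]
    _ ≤ ∑ i, u i * (M - m) := sum_le_sum fun i _ => by
        nlinarith [mul_nonneg (sub_nonneg.2 (hwu i)) (sub_nonneg.2 (ht i).1),
          mul_nonneg (hu i) (sub_nonneg.2 (ht i).2)]
    _ = (∑ i, u i) * (M - m) := (sum_mul ..).symm

theorem abs_sum_mul_le_of_div_mem_Icc {ι : Type*} [Fintype ι] {p q s : ι → ℝ} {m M : ℝ}
    (hpq : ∀ i, 0 ≤ p i * q i) (hq : ∀ i, q i ≠ 0) (hs : ∀ i, s i / q i ∈ Set.Icc m M) :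
    |∑ i, ((∑ j, p j * q j) * q i - (∑ j, q j ^ 2) * p i) * s i| ≤
      (∑ i, p i * q i) * (∑ i, q i ^ 2) * (M - m) := by
  set B := ∑ i, p i * q i
  set C := ∑ i, q i ^ 2
  have hB : 0 ≤ B := sum_nonneg fun i _ => hpq i
  have hC : 0 ≤ C := sum_nonneg fun i _ => sq_nonneg _
  set w := fun i => (B * q i - C * p i) * q i
  have hw : ∑ i, w i = 0 := by
    simp only [w, sub_mul, sum_sub_distrib, mul_assoc, ← mul_sum, ← sq]
    ring
  have hws : ∑ i, (B * q i - C * p i) * s i = ∑ i, w i * (s i / q i) :=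
    sum_congr rfl fun i _ => by simp only [w]; field_simp [hq i]
  have hupper := sum_mul_le_of_sum_eq_zero hw (u := fun i => B * q i ^ 2)
    (fun i => by nlinarith [mul_nonneg hC (hpq i)]) (fun i => mul_nonneg hB (sq_nonneg _)) hs
  have hlower := sum_mul_le_of_sum_eq_zero (w := -w) (by simp [hw])
    (u := fun i => C * (p i * q i))
    (fun i => by simp only [w, Pi.neg_apply]; nlinarith [mul_nonneg hB (sq_nonneg (q i))])
    (fun i => mul_nonneg hC (hpq i)) hs
  simp only [← mul_sum, Pi.neg_apply, neg_mul, sum_neg_distrib] at hupper hlower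
  rw [hws, abs_le]
  constructor <;> linarith

theorem lemma3_item2_general (n : ℕ) (hn : 0 < n) (p q r s : Fin n → ℝ)
    (hp : ∀ i, 0 < p i) (hq : ∀ i, 0 < q i)
    (hnotprop : ¬ ∃ c : ℝ, ∀ i, p i = c * q i)
    (xstar : ℝ) (hexact : ∀ i, p i * xstar - s i = r i)
    (xh bh : ℝ)
    (hmin : ∀ x b : ℝ,
      ∑ i, (xh * p i - bh * q i - r i) ^ 2 ≤ ∑ i, (x * p i - b * q i - r i) ^ 2) :
    |xh - xstar| ≤
      (∑ i, p i * q i) * (∑ i, q i ^ 2) /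
          ((∑ i, p i ^ 2) * (∑ i, q i ^ 2) - (∑ i, p i * q i) ^ 2) *
        (sSup (Set.range fun i => s i / q i) - sInf (Set.range fun i => s i / q i)) := by
  have hD := sum_sq_mul_sum_sq_sub_sq_pos (fun h => (hq ⟨0, hn⟩).ne' (congrFun h _)) hnotprop
  obtain ⟨hpe, hqe⟩ := sum_mul_residual_eq_zero_of_forall_le hmin
  have hresidual : ∀ i, xh * p i - bh * q i - r i = (xh - xstar) * p i - bh * q i + s i :=
    fun i => by rw [← hexact]; ring
  simp only [hresidual] at hpe hqe
  have hrange := Set.finite_range fun i => s i / q i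
  have hbound := abs_sum_mul_le_of_div_mem_Icc (fun i => (mul_pos (hp i) (hq i)).le)
    (fun i => (hq i).ne') fun i => ⟨csInf_le hrange.bddBelow ⟨i, rfl⟩,
      le_csSup hrange.bddAbove ⟨i, rfl⟩⟩
  rw [← gram_det_mul_eq_of_normal_equations hpe hqe, abs_mul, abs_of_pos hD] at hbound
  rw [div_mul_eq_mul_div, le_div_iff₀ hD]
  linarith

theorem lemma3_item2 (n : ℕ) (hn : 0 < n) (p q r s : Fin n → ℝ)
    (hp : ∀ i, 0 < p i) (hq : ∀ i, 0 < q i) (hr : ∀ i, 0 < r i) (hs : ∀ i, 0 < s i)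
    (hnotprop : ¬ ∃ c : ℝ, ∀ i, p i = c * q i)
    (xstar : ℝ) (hexact : ∀ i, p i * xstar - s i = r i)
    (xh bh : ℝ)
    (hmin : ∀ x b : ℝ,
      ∑ i, (xh * p i - bh * q i - r i) ^ 2 ≤ ∑ i, (x * p i - b * q i - r i) ^ 2) :
    |xh - xstar| ≤
      (∑ i, p i * q i) * (∑ i, q i ^ 2) /
          ((∑ i, p i ^ 2) * (∑ i, q i ^ 2) - (∑ i, p i * q i) ^ 2) *
        (sSup (Set.range fun i => s i / q i) - sInf (Set.range fun i => s i / q i)) :=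
  lemma3_item2_general n hn p q r s hp hq hnotprop xstar hexact xh bh hmin
end

section
/- For the two-tissue compartment ODE system dC₁/dt = K₁C_p − (k₂+k₃)C₁ + k₄C_S, dC_S/dt = k₃C₁ − k₄C_S with C₁(0) = C_S(0) = 0 and all rate constants positive, the total concentration C_T = C₁ + C_S satisfies the integral identity ∫₀ᵗ C_T(τ)dτ = DV·∫₀ᵗ C_p(τ)dτ − ((k₃+k₄)/(k₂k₄))·C_T(t) − (1/k₄)·C_S(t), where DV = (K₁/k₂)(1 + k₃/k₄). -/
/-! Integrating both equations over `[0, t]` and using the zero initial conditions gives two linear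
relations between `C₁(t)`, `C_S(t)` and the integrals of `C_p`, `C₁`, `C_S`. Taking
`(k₃ + k₄)` times the first plus `(k₂ + k₃ + k₄)` times the second eliminates everything except
`∫ C₁ + ∫ C_S`, and dividing by `k₂ k₄` gives the identity. -/

open MeasureTheory

theorem intervalIntegral_eq_of_hasDerivAt_of_eq_zero {f f' : ℝ → ℝ}
    (hf : ∀ t, HasDerivAt f (f' t) t) (h0 : f 0 = 0) {t : ℝ}
    (hf' : IntervalIntegrable f' volume 0 t) :
    ∫ τ in (0 : ℝ)..t, f' τ = f t := by
  simpa [h0] using intervalIntegral.integral_eq_sub_of_hasDerivAt (fun τ _ => hf τ) hf'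

namespace intervalIntegral

variable {a b : ℝ} {f g h : ℝ → ℝ}

theorem integral_const_mul_sub_const_mul (hf : IntervalIntegrable f volume a b)
    (hg : IntervalIntegrable g volume a b) (p q : ℝ) :
    ∫ x in a..b, (p * f x - q * g x) = p * (∫ x in a..b, f x) - q * ∫ x in a..b, g x := by
  rw [integral_sub (hf.const_mul p) (hg.const_mul q), integral_const_mul, integral_const_mul]

theorem integral_const_mul_sub_const_mul_add_const_mul (hf : IntervalIntegrable f volume a b)
    (hg : IntervalIntegrable g volume a b) (hh : IntervalIntegrable h volume a b) (p q r : ℝ) :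
    ∫ x in a..b, (p * f x - q * g x + r * h x) =
      p * (∫ x in a..b, f x) - q * (∫ x in a..b, g x) + r * ∫ x in a..b, h x := by
  rw [integral_add ((hf.const_mul p).sub (hg.const_mul q)) (hh.const_mul r),
    integral_const_mul_sub_const_mul hf hg, integral_const_mul]

end intervalIntegral

theorem add_eq_of_two_tissue_balance {K1 k2 k3 k4 P A B x y : ℝ} (hk2 : k2 ≠ 0) (hk4 : k4 ≠ 0)
    (hx : K1 * P - (k2 + k3) * A + k4 * B = x) (hy : k3 * A - k4 * B = y) :
    A + B = (K1 / k2) * (1 + k3 / k4) * P - ((k3 + k4) / (k2 * k4)) * (x + y) - (1 / k4) * y := by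
  field_simp
  linear_combination -(k3 + k4) * hx - (k2 + k3 + k4) * hy

theorem two_tissue_integral_identity_general
    (K1 k2 k3 k4 : ℝ) (hk2 : 0 < k2) (hk4 : 0 < k4)
    (Cp C1 CS : ℝ → ℝ) (hCp : Continuous Cp)
    (hC1' : ∀ t, HasDerivAt C1 (K1 * Cp t - (k2 + k3) * C1 t + k4 * CS t) t)
    (hCS' : ∀ t, HasDerivAt CS (k3 * C1 t - k4 * CS t) t)
    (hC10 : C1 0 = 0) (hCS0 : CS 0 = 0) :
    ∀ t : ℝ,
      (∫ τ in (0 : ℝ)..t, (C1 τ + CS τ)) =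
        (K1 / k2) * (1 + k3 / k4) * (∫ τ in (0 : ℝ)..t, Cp τ) -
          ((k3 + k4) / (k2 * k4)) * (C1 t + CS t) - (1 / k4) * CS t := by
  intro t
  have hC1 : Continuous C1 := continuous_iff_continuousAt.2 fun τ => (hC1' τ).continuousAt
  have hCS : Continuous CS := continuous_iff_continuousAt.2 fun τ => (hCS' τ).continuousAt
  have hCp_int := hCp.intervalIntegrable (μ := volume) 0 t
  have hC1_int := hC1.intervalIntegrable (μ := volume) 0 t
  have hCS_int := hCS.intervalIntegrable (μ := volume) 0 t
  rw [intervalIntegral.integral_add hC1_int hCS_int]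
  refine add_eq_of_two_tissue_balance hk2.ne' hk4.ne' ?_ ?_
  · rw [← intervalIntegral.integral_const_mul_sub_const_mul_add_const_mul hCp_int hC1_int hCS_int]
    exact intervalIntegral_eq_of_hasDerivAt_of_eq_zero hC1' hC10
      (((hCp_int.const_mul _).sub (hC1_int.const_mul _)).add (hCS_int.const_mul _))
  · rw [← intervalIntegral.integral_const_mul_sub_const_mul hC1_int hCS_int]
    exact intervalIntegral_eq_of_hasDerivAt_of_eq_zero hCS' hCS0
      ((hC1_int.const_mul _).sub (hCS_int.const_mul _))

theorem two_tissue_integral_identity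
    (K1 k2 k3 k4 : ℝ) (hK1 : 0 < K1) (hk2 : 0 < k2) (hk3 : 0 < k3) (hk4 : 0 < k4)
    (Cp C1 CS : ℝ → ℝ) (hCp : Continuous Cp)
    (hC1' : ∀ t, HasDerivAt C1 (K1 * Cp t - (k2 + k3) * C1 t + k4 * CS t) t)
    (hCS' : ∀ t, HasDerivAt CS (k3 * C1 t - k4 * CS t) t)
    (hC10 : C1 0 = 0) (hCS0 : CS 0 = 0) :
    ∀ t : ℝ,
      (∫ τ in (0 : ℝ)..t, (C1 τ + CS τ)) =
        (K1 / k2) * (1 + k3 / k4) * (∫ τ in (0 : ℝ)..t, Cp τ) -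
          ((k3 + k4) / (k2 * k4)) * (C1 t + CS t) - (1 / k4) * CS t :=
  two_tissue_integral_identity_general K1 k2 k3 k4 hk2 hk4 Cp C1 CS hCp hC1' hCS' hC10 hCS0
end
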